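/- arXiv:1808.02749 — 2 statements merged into one kernel-verified Lean document; each statement's English description precedes it below -/
import Mathlib

section
/- Let 1 ≤ p < ∞ and let q ∈ L^p_loc([0,∞) : X) be a Weyl-p-vanishing function. Define q_e ∈ L^p_loc(ℝ : X) by q_e(t) := q(t) for t ≥ 0 and q_e(t) := 0 for t < 0. Then q_e ∈ W_pPAA_0(ℝ : X); in fact for every x ∈ ℝ the inner limit lim_{l→+∞} (1/(2l)) ∫_{x-l}^{x+l} ‖q_e(t)‖^p dt exists and equals 0, and consequently lim_{T→+∞} (1/(2T)) ∫_{-T}^{T} [ lim_{l→+∞} (1/(2l)) ∫_{x-l}^{x+l} ‖q_e(t)‖^p dt ]^{1/p} dx = 0. -/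
open MeasureTheory Filter Set

/-- If `q ∈ L^p_loc([0,∞) : X)` is Weyl-p-vanishing and `q_e` denotes its
extension by zero to the whole real line, then `q_e ∈ W_pPAA_0(ℝ : X)`: for every `x ∈ ℝ`
the inner limit `lim_{l→+∞} (1/(2l)) ∫_{x-l}^{x+l} ‖q_e(t)‖^p dt` exists and equals `0`,
and consequently
`lim_{T→+∞} (1/(2T)) ∫_{-T}^{T} [lim_{l→+∞} (1/(2l)) ∫_{x-l}^{x+l} ‖q_e(t)‖^p dt]^{1/p} dx = 0`. -/
theorem weyl_p_vanishing_extension_in_WpPAA0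
    {X : Type*} [NormedAddCommGroup X] [NormedSpace ℂ X] [CompleteSpace X]
    (p : ℝ) (hp : 1 ≤ p) (q : ℝ → X)
    (hmeas : AEStronglyMeasurable q volume)
    (hloc : ∀ a b : ℝ, IntervalIntegrable (fun t => ‖q t‖ ^ p) volume a b)
    (hW : ∀ ε > (0:ℝ), ∃ l₀ > (0:ℝ), ∃ t₀ > (0:ℝ), ∀ x ≥ t₀, ∀ l ≥ l₀,
      ((1 / (2 * l)) * ∫ s in x..(x + l), ‖q s‖ ^ p) ≤ ε)
    (qe : ℝ → X) (hqe : ∀ t : ℝ, qe t = if 0 ≤ t then q t else 0) :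
    (∀ x : ℝ,
      Tendsto (fun l : ℝ => (1 / (2 * l)) * ∫ t in (x - l)..(x + l), ‖qe t‖ ^ p)
        atTop (nhds 0)) ∧
    Tendsto (fun T : ℝ => (1 / (2 * T)) *
        ∫ x in (-T)..T,
          (limsup (fun l : ℝ =>
            (1 / (2 * l)) * ∫ t in (x - l)..(x + l), ‖qe t‖ ^ p) atTop) ^ (1 / p))
      atTop (nhds 0) := by
  have hp0 : (0:ℝ) < p := lt_of_lt_of_le one_pos hp
  have hpne : p ≠ 0 := ne_of_gt hp0
  -- measurability of qe
  have hqem : AEStronglyMeasurable qe volume := by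
    have hqeq : qe = Set.indicator (Set.Ici (0:ℝ)) q := by
      funext t; rw [hqe t]; simp [Set.indicator, Set.mem_Ici]
    rw [hqeq]; exact hmeas.indicator measurableSet_Ici
  have hfm : AEStronglyMeasurable (fun t => ‖qe t‖ ^ p) volume :=
    (Real.continuous_rpow_const hp0.le).comp_aestronglyMeasurable hqem.norm
  -- interval integrability for qe
  have hqeI : ∀ a b : ℝ, IntervalIntegrable (fun t => ‖qe t‖ ^ p) volume a b := by
    intro a b
    refine (hloc a b).mono_fun hfm.restrict (Filter.Eventually.of_forall fun t => ?_)
    show ‖‖qe t‖ ^ p‖ ≤ ‖‖q t‖ ^ p‖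
    rw [Real.norm_eq_abs, Real.norm_eq_abs,
      abs_of_nonneg (Real.rpow_nonneg (norm_nonneg _) _),
      abs_of_nonneg (Real.rpow_nonneg (norm_nonneg _) _), hqe t]
    split_ifs with h
    · exact le_refl _
    · simp [Real.zero_rpow hpne, Real.rpow_nonneg (norm_nonneg _)]
  have h0 : ∀ᵐ t : ℝ, t ≠ (0:ℝ) := by
    refine ae_iff.2 ?_
    have : {t : ℝ | ¬ t ≠ 0} = {0} := by ext t; simp
    rw [this]; exact Real.volume_singleton
  have inner : ∀ x : ℝ,
      Tendsto (fun l : ℝ => (1 / (2 * l)) * ∫ t in (x - l)..(x + l), ‖qe t‖ ^ p)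
        atTop (nhds 0) := by
    intro x
    rw [Metric.tendsto_atTop]
    intro δ hδ
    obtain ⟨l₀, hl₀, t₀, ht₀, hWb⟩ := hW (δ/8) (by linarith)
    set C := ∫ t in (0:ℝ)..t₀, ‖q t‖ ^ p with hCdef
    have hC0 : 0 ≤ C :=
      intervalIntegral.integral_nonneg (le_of_lt ht₀)
        (fun t _ => Real.rpow_nonneg (norm_nonneg _) _)
    refine ⟨max (|x| + t₀ + l₀ + 1) (4 * C / δ + 1), fun l hl => ?_⟩
    have hl1 : |x| + t₀ + l₀ + 1 ≤ l := le_trans (le_max_left _ _) hl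
    have hl2 : 4 * C / δ + 1 ≤ l := le_trans (le_max_right _ _) hl
    have hxabs : x ≤ |x| := le_abs_self x
    have hxabs' : -|x| ≤ x := neg_abs_le x
    have habs0 : 0 ≤ |x| := abs_nonneg x
    have hlpos : 0 < l := by linarith
    have hxl : x - l ≤ 0 := by linarith
    have hx2 : (0:ℝ) ≤ x + l := by linarith
    have ht0le : t₀ ≤ x + l := by linarith
    have hLge : l₀ ≤ x + l - t₀ := by linarith
    have hLpos : 0 < x + l - t₀ := lt_of_lt_of_le hl₀ hLge
    -- value of the integral
    have split1 : (∫ t in (x - l)..(x + l), ‖qe t‖ ^ p)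
        = (∫ t in (x - l)..(0:ℝ), ‖qe t‖ ^ p) + ∫ t in (0:ℝ)..(x + l), ‖qe t‖ ^ p :=
      (intervalIntegral.integral_add_adjacent_intervals (hqeI _ _) (hqeI _ _)).symm
    have eq1 : (∫ t in (x - l)..(0:ℝ), ‖qe t‖ ^ p) = 0 := by
      rw [intervalIntegral.integral_congr_ae (g := fun _ => (0:ℝ)) ?_,
        intervalIntegral.integral_zero]
      filter_upwards [h0] with t ht hmem
      have htle : t ≤ 0 := by
        rw [Set.uIoc_of_le hxl] at hmem; exact hmem.2
      rw [hqe t, if_neg (by intro h; exact ht (le_antisymm htle h))]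
      simp [Real.zero_rpow hpne]
    have eq2 : (∫ t in (0:ℝ)..(x + l), ‖qe t‖ ^ p)
        = ∫ t in (0:ℝ)..(x + l), ‖q t‖ ^ p := by
      apply intervalIntegral.integral_congr
      intro t ht
      rw [Set.uIcc_of_le hx2] at ht
      show ‖qe t‖ ^ p = ‖q t‖ ^ p
      rw [hqe t, if_pos ht.1]
    have split2 : (∫ t in (0:ℝ)..(x + l), ‖q t‖ ^ p)
        = C + ∫ t in t₀..(x + l), ‖q t‖ ^ p :=
      (intervalIntegral.integral_add_adjacent_intervals (hloc _ _) (hloc _ _)).symm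
    -- bound the tail integral
    have hJ := hWb t₀ (le_refl t₀) (x + l - t₀) hLge
    have hteq : t₀ + (x + l - t₀) = x + l := by ring
    rw [hteq] at hJ
    have hJ' : (∫ t in t₀..(x + l), ‖q t‖ ^ p) ≤ 2 * (x + l - t₀) * (δ / 8) := by
      have h2L : (0:ℝ) < 2 * (x + l - t₀) := by linarith
      rw [one_div, inv_mul_le_iff₀ h2L] at hJ
      linarith [hJ]
    have hJ'' : (∫ t in t₀..(x + l), ‖q t‖ ^ p) ≤ 2 * l * (δ / 4) := by
      have hL2l : x + l - t₀ ≤ 2 * l := by linarith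
      nlinarith [hJ', hδ]
    have hC' : 4 * C ≤ (l - 1) * δ := by
      have := (div_le_iff₀ hδ).1 (by linarith : 4 * C / δ ≤ l - 1)
      linarith
    -- nonnegativity of the whole integral
    have hInn : 0 ≤ ∫ t in (x - l)..(x + l), ‖qe t‖ ^ p :=
      intervalIntegral.integral_nonneg (by linarith)
        (fun t _ => Real.rpow_nonneg (norm_nonneg _) _)
    rw [Real.dist_eq, sub_zero,
      abs_of_nonneg (mul_nonneg (by positivity) hInn)]
    rw [split1, eq1, eq2, split2, zero_add]
    have h2l : (0:ℝ) < 2 * l := by linarith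
    rw [one_div, inv_mul_lt_iff₀ h2l]
    nlinarith [hJ'', hC', hδ, hlpos]
  refine ⟨inner, ?_⟩
  have hzero : ∀ x : ℝ,
      limsup (fun l : ℝ =>
        (1 / (2 * l)) * ∫ t in (x - l)..(x + l), ‖qe t‖ ^ p) atTop = 0 :=
    fun x => (inner x).limsup_eq
  have hfun : (fun T : ℝ => (1 / (2 * T)) *
      ∫ x in (-T)..T,
        (limsup (fun l : ℝ =>
          (1 / (2 * l)) * ∫ t in (x - l)..(x + l), ‖qe t‖ ^ p) atTop) ^ (1 / p))
      = fun _ : ℝ => (0:ℝ) := by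
    funext T
    have : (∫ x in (-T)..T,
        (limsup (fun l : ℝ =>
          (1 / (2 * l)) * ∫ t in (x - l)..(x + l), ‖qe t‖ ^ p) atTop) ^ (1 / p)) = 0 := by
      rw [intervalIntegral.integral_congr (g := fun _ => (0:ℝ))
        (fun x _ => by rw [hzero x, Real.zero_rpow (one_div_ne_zero hpne)]),
        intervalIntegral.integral_zero]
    rw [this, mul_zero]
  rw [hfun]
  exact tendsto_const_nhds
end

section
/- Let ρ₁, ρ₂ ∈ U_∞. Suppose that (i) for every s ∈ ℝ, lim_{T→+∞} ( |∫_{-T-s}^{-T} ρ₂(t) dt| + |∫_{T}^{T-s} ρ₂(t) dt| ) / ∫_{-T}^{T} ρ₁(t) dt = 0, and (ii) there exists a function g : ℝ → (0,∞) such that ρ₂(t−s) ≤ g(s) ρ₂(t) for all t, s ∈ ℝ. Then the space PAP_0(ℝ, X, ρ₁, ρ₂) is translation invariant: for every f ∈ PAP_0(ℝ, X, ρ₁, ρ₂) and every s ∈ ℝ, the function t ↦ f(t−s) belongs to PAP_0(ℝ, X, ρ₁, ρ₂). -/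
open MeasureTheory Filter Set

/-- A weight of class `U_∞`: locally integrable, a.e. positive, and
`∫_{-T}^{T} ρ(t) dt → ∞` as `T → +∞`. -/
def IsWeightUInfty (ρ : ℝ → ℝ) : Prop :=
  (∀ a b : ℝ, IntervalIntegrable ρ MeasureTheory.volume a b) ∧
  (∀ᵐ t : ℝ ∂MeasureTheory.volume, 0 < ρ t) ∧
  Filter.Tendsto (fun T : ℝ => ∫ t in (-T)..T, ρ t) Filter.atTop Filter.atTop

/-- Membership in `PAP_0(ℝ, X, ρ₁, ρ₂)`: bounded continuous functions `f` with
`lim_{T→+∞} (1/(2∫_{-T}^{T} ρ₁)) ∫_{-T}^{T} ‖f(t)‖ ρ₂(t) dt = 0`. -/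
def MemPAP0 {X : Type*} [NormedAddCommGroup X] (ρ₁ ρ₂ : ℝ → ℝ) (f : ℝ → X) : Prop :=
  Continuous f ∧ (∃ C : ℝ, ∀ t : ℝ, ‖f t‖ ≤ C) ∧
  Filter.Tendsto (fun T : ℝ =>
      (1 / (2 * ∫ t in (-T)..T, ρ₁ t)) * ∫ t in (-T)..T, ‖f t‖ * ρ₂ t)
    Filter.atTop (nhds 0)

/-! Substituting `u = t - s` and using `ρ₂(u + s) ≤ g(-s) ρ₂(u)` bounds the weighted mean of the
translate over `[-T, T]` by `g(-s)` times the weighted mean of `f` over `[-T - s, T - s]`.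
That interval differs from `[-T, T]` by two pieces of length `|s|`, on which `‖f‖ ≤ C` and the
`ρ₂`-mass, relative to `∫_{-T}^{T} ρ₁`, tends to zero by hypothesis (i). -/

section WeightedIntegral

variable {X : Type*} [NormedAddCommGroup X] {f : ℝ → X} {ρ : ℝ → ℝ} {C : ℝ}

theorem integral_norm_mul_nonneg (hρ : ∀ᵐ t, 0 ≤ ρ t) {a b : ℝ} (hab : a ≤ b) :
    0 ≤ ∫ t in a..b, ‖f t‖ * ρ t :=
  intervalIntegral.integral_nonneg_of_ae hab <| by
    filter_upwards [hρ] with t ht using mul_nonneg (norm_nonneg _) ht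

theorem integral_norm_mul_le_mul_abs_integral (hf : Continuous f) (hC : ∀ t, ‖f t‖ ≤ C)
    (hρi : ∀ a b, IntervalIntegrable ρ volume a b) (hρ : ∀ᵐ t, 0 ≤ ρ t) (a b : ℝ) :
    ∫ t in a..b, ‖f t‖ * ρ t ≤ C * |∫ t in a..b, ρ t| := by
  have hC0 : 0 ≤ C := (norm_nonneg _).trans (hC 0)
  rcases le_total a b with hab | hba
  · calc ∫ t in a..b, ‖f t‖ * ρ t
        ≤ ∫ t in a..b, C * ρ t := by
          refine intervalIntegral.integral_mono_ae_restrict hab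
            ((hρi a b).continuousOn_mul hf.norm.continuousOn) ((hρi a b).const_mul C) ?_
          filter_upwards [ae_restrict_of_ae hρ] with t ht
          exact mul_le_mul_of_nonneg_right (hC t) ht
      _ = C * ∫ t in a..b, ρ t := intervalIntegral.integral_const_mul _ _
      _ ≤ C * |∫ t in a..b, ρ t| := mul_le_mul_of_nonneg_left (le_abs_self _) hC0
  · rw [intervalIntegral.integral_symm b a]
    have := integral_norm_mul_nonneg (f := f) hρ hba
    have : 0 ≤ C * |∫ t in a..b, ρ t| := by positivity
    linarith

theorem integral_norm_comp_sub_mul_le (hf : Continuous f)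
    (hρi : ∀ a b, IntervalIntegrable ρ volume a b) {s c : ℝ} (hρs : ∀ u, ρ (u + s) ≤ c * ρ u)
    {a b : ℝ} (hab : a ≤ b) :
    ∫ t in a..b, ‖f (t - s)‖ * ρ t ≤ c * ∫ u in a - s..b - s, ‖f u‖ * ρ u := by
  have hρi' : IntervalIntegrable (fun u => ρ (u + s)) volume (a - s) (b - s) := by
    simpa using (hρi a b).comp_add_right s
  calc ∫ t in a..b, ‖f (t - s)‖ * ρ t
      = ∫ u in a - s..b - s, ‖f u‖ * ρ (u + s) := by
        simpa using intervalIntegral.integral_comp_sub_right (fun u => ‖f u‖ * ρ (u + s)) s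
    _ ≤ ∫ u in a - s..b - s, c * (‖f u‖ * ρ u) := by
        refine intervalIntegral.integral_mono (by linarith)
          (hρi'.continuousOn_mul hf.norm.continuousOn)
          (((hρi _ _).continuousOn_mul hf.norm.continuousOn).const_mul c) fun u => ?_
        calc ‖f u‖ * ρ (u + s) ≤ ‖f u‖ * (c * ρ u) :=
              mul_le_mul_of_nonneg_left (hρs u) (norm_nonneg _)
          _ = c * (‖f u‖ * ρ u) := by ring
    _ = c * ∫ u in a - s..b - s, ‖f u‖ * ρ u := intervalIntegral.integral_const_mul _ _

theorem integral_norm_comp_sub_mul_le_add_edges (hf : Continuous f) (hC : ∀ t, ‖f t‖ ≤ C)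
    (hρi : ∀ a b, IntervalIntegrable ρ volume a b) (hρ : ∀ᵐ t, 0 ≤ ρ t)
    {s c : ℝ} (hc : 0 ≤ c) (hρs : ∀ u, ρ (u + s) ≤ c * ρ u) {T : ℝ} (hT : 0 ≤ T) :
    ∫ t in -T..T, ‖f (t - s)‖ * ρ t ≤ c * ((∫ t in -T..T, ‖f t‖ * ρ t) +
      C * (|∫ t in -T - s..-T, ρ t| + |∫ t in T..T - s, ρ t|)) := by
  have hint : ∀ a b, IntervalIntegrable (fun t => ‖f t‖ * ρ t) volume a b :=
    fun a b => (hρi a b).continuousOn_mul hf.norm.continuousOn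
  have hsplit : ∫ u in -T - s..T - s, ‖f u‖ * ρ u = (∫ u in -T - s..-T, ‖f u‖ * ρ u) +
      (∫ u in -T..T, ‖f u‖ * ρ u) + ∫ u in T..T - s, ‖f u‖ * ρ u := by
    rw [intervalIntegral.integral_add_adjacent_intervals (hint (-T - s) (-T)) (hint (-T) T),
      intervalIntegral.integral_add_adjacent_intervals (hint (-T - s) T) (hint T (T - s))]
  have hleft := integral_norm_mul_le_mul_abs_integral hf hC hρi hρ (-T - s) (-T)
  have hright := integral_norm_mul_le_mul_abs_integral hf hC hρi hρ T (T - s)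
  calc ∫ t in -T..T, ‖f (t - s)‖ * ρ t
      ≤ c * ∫ u in -T - s..T - s, ‖f u‖ * ρ u :=
        integral_norm_comp_sub_mul_le hf hρi hρs (by linarith)
    _ ≤ _ := by
        rw [hsplit]
        refine mul_le_mul_of_nonneg_left ?_ hc
        rw [mul_add]
        linarith

end WeightedIntegral

theorem PAP0_translation_invariant_general
    {X : Type*} [NormedAddCommGroup X]
    (ρ₁ ρ₂ : ℝ → ℝ) (hρ₁ : IsWeightUInfty ρ₁) (hρ₂ : IsWeightUInfty ρ₂)
    (hi : ∀ s : ℝ, Filter.Tendsto (fun T : ℝ =>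
        (|∫ t in (-T - s)..(-T), ρ₂ t| + |∫ t in T..(T - s), ρ₂ t|) /
          ∫ t in (-T)..T, ρ₁ t) Filter.atTop (nhds 0))
    (hii : ∃ g : ℝ → ℝ, (∀ s : ℝ, 0 < g s) ∧ ∀ t s : ℝ, ρ₂ (t - s) ≤ g s * ρ₂ t) :
    ∀ f : ℝ → X, MemPAP0 ρ₁ ρ₂ f → ∀ s : ℝ, MemPAP0 ρ₁ ρ₂ (fun t : ℝ => f (t - s)) := by
  obtain ⟨g, hgpos, hg⟩ := hii
  rintro f ⟨hf, ⟨C, hC⟩, hlim⟩ s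
  refine ⟨hf.comp (continuous_sub_right s), ⟨C, fun t => hC _⟩, ?_⟩
  have hρ₂nonneg : ∀ᵐ t, 0 ≤ ρ₂ t := by filter_upwards [hρ₂.2.1] with t ht using ht.le
  have hρ₂s : ∀ u, ρ₂ (u + s) ≤ g (-s) * ρ₂ u := fun u => by simpa using hg u (-s)
  set A : ℝ → ℝ := fun T => ∫ t in -T..T, ρ₁ t
  have hbound : Tendsto (fun T => g (-s) * ((1 / (2 * A T)) * (∫ t in -T..T, ‖f t‖ * ρ₂ t) +
      C / 2 * ((|∫ t in -T - s..-T, ρ₂ t| + |∫ t in T..T - s, ρ₂ t|) / A T))) atTop (nhds 0) := by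
    simpa using (hlim.add ((hi s).const_mul (C / 2))).const_mul (g (-s))
  refine squeeze_zero' ?_ ?_ hbound <;>
    filter_upwards [eventually_ge_atTop 0, hρ₁.2.2.eventually_gt_atTop 0] with T hT hA
  · have := integral_norm_mul_nonneg (f := fun t => f (t - s)) hρ₂nonneg (neg_le_self hT)
    positivity
  · have key := integral_norm_comp_sub_mul_le_add_edges hf hC hρ₂.1 hρ₂nonneg (hgpos (-s)).le
      hρ₂s hT
    calc (1 / (2 * A T)) * ∫ t in -T..T, ‖f (t - s)‖ * ρ₂ t
        ≤ (1 / (2 * A T)) * (g (-s) * ((∫ t in -T..T, ‖f t‖ * ρ₂ t) +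
          C * (|∫ t in -T - s..-T, ρ₂ t| + |∫ t in T..T - s, ρ₂ t|))) := by gcongr
      _ = _ := by field_simp

/-- Under conditions (i) and (ii) on the weights `ρ₁, ρ₂ ∈ U_∞`, the space
`PAP_0(ℝ, X, ρ₁, ρ₂)` is translation invariant. -/
theorem PAP0_translation_invariant
    {X : Type*} [NormedAddCommGroup X] [NormedSpace ℂ X] [CompleteSpace X]
    (ρ₁ ρ₂ : ℝ → ℝ) (hρ₁ : IsWeightUInfty ρ₁) (hρ₂ : IsWeightUInfty ρ₂)
    (hi : ∀ s : ℝ, Filter.Tendsto (fun T : ℝ =>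
        (|∫ t in (-T - s)..(-T), ρ₂ t| + |∫ t in T..(T - s), ρ₂ t|) /
          ∫ t in (-T)..T, ρ₁ t) Filter.atTop (nhds 0))
    (hii : ∃ g : ℝ → ℝ, (∀ s : ℝ, 0 < g s) ∧ ∀ t s : ℝ, ρ₂ (t - s) ≤ g s * ρ₂ t) :
    ∀ f : ℝ → X, MemPAP0 ρ₁ ρ₂ f → ∀ s : ℝ, MemPAP0 ρ₁ ρ₂ (fun t : ℝ => f (t - s)) :=
  PAP0_translation_invariant_general ρ₁ ρ₂ hρ₁ hρ₂ hi hii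
end
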